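/- arXiv:math/0607813 — 4 statements merged into one kernel-verified Lean document; each statement's English description precedes it below -/
import Mathlib

section
/- Let (f_k)_{k≥0} be a real sequence with Σ_{k≥0}(1+k)^{3/2} f_k² < ∞ and Σ_{k≥0} f_k = 0 (this series converges absolutely). Define h_n = Σ_{k=0}^{n} E_{n−k} f_k. Then there is a constant C > 0 such that |h_n| ≤ C n^{−3/4} (log n)^{1/2} for all n ≥ 2. -/
open scoped BigOperators

/-- `E_m = (2m)! / (2^{2m} (m!)^2) = C(2m,m) / 4^m`. -/
noncomputable def Ecoef (m : ℕ) : ℝ := (Nat.choose (2 * m) m : ℝ) / 4 ^ m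

/-!
Since `∑ f_k = 0`, `h_n = ∑_k g_k f_k` over all `k ≥ 0`, with `g_k = E_{n-k} 1_{k ≤ n} - E_n`,
so by Cauchy–Schwarz `h_n² ≤ (∑ (1+k)^{3/2} f_k²) · ∑ g_k² (1+k)^{-3/2}`, and it suffices to
show that the last sum is `O(n^{-3/2} log n)`. This follows from `E_m² ≤ 1/(m+1)` and
`E_m - E_{m+1} = E_m / (2(m+1))`: for `k ≤ n/2` the difference `E_{n-k} - E_n` is
`O(k n^{-3/2})`; for `n/2 < k ≤ n` one has `g_k² ≤ 1/(n-k+1)` against the weight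
`O(n^{-3/2})`, which produces a harmonic sum and the logarithm; and the tail `k > n`
contributes `E_n² ∑_{k>n} (1+k)^{-3/2} = O(n^{-3/2})`.
-/

open Finset Real

theorem sq_tsum_mul_le_tsum_mul_tsum {w f g : ℕ → ℝ} (hw : ∀ k, 0 < w k)
    (hf : Summable fun k => w k * f k ^ 2) (hg : Summable fun k => g k ^ 2 / w k) :
    (∑' k, g k * f k) ^ 2 ≤ (∑' k, w k * f k ^ 2) * ∑' k, g k ^ 2 / w k := by
  have hwf : ∀ k, 0 ≤ w k * f k ^ 2 := fun k => by have := hw k; positivity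
  have hgw : ∀ k, 0 ≤ g k ^ 2 / w k := fun k => by have := hw k; positivity
  set A := ∑' k, w k * f k ^ 2
  set B := ∑' k, g k ^ 2 / w k
  have hAB : 0 ≤ A * B := mul_nonneg (tsum_nonneg hwf) (tsum_nonneg hgw)
  have partial_le : ∀ M, ∑ k ∈ range M, |g k * f k| ≤ √(A * B) := by
    intro M
    rw [le_sqrt (by positivity) hAB]
    calc (∑ k ∈ range M, |g k * f k|) ^ 2
        ≤ (∑ k ∈ range M, w k * f k ^ 2) * ∑ k ∈ range M, g k ^ 2 / w k := by
          refine sum_sq_le_sum_mul_sum_of_sq_le_mul _ (fun k _ => hwf k) (fun k _ => hgw k)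
            fun k _ => le_of_eq ?_
          have := (hw k).ne'
          rw [sq_abs]; field_simp
      _ ≤ A * B := mul_le_mul (hf.sum_le_tsum _ fun k _ => hwf k)
          (hg.sum_le_tsum _ fun k _ => hgw k) (sum_nonneg fun k _ => hgw k) (tsum_nonneg hwf)
  have habs : Summable fun k => |g k * f k| :=
    summable_of_sum_range_le (fun _ => abs_nonneg _) partial_le
  calc (∑' k, g k * f k) ^ 2 = |∑' k, g k * f k| ^ 2 := (sq_abs _).symm
    _ ≤ (∑' k, |g k * f k|) ^ 2 := by
      gcongr
      simpa using norm_tsum_le_tsum_norm (habs.congr fun k => (Real.norm_eq_abs _).symm)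
    _ ≤ √(A * B) ^ 2 := by
      gcongr
      exact Real.tsum_le_of_sum_range_le (fun _ => abs_nonneg _) partial_le
    _ = A * B := sq_sqrt hAB

theorem rpow_three_halves {x : ℝ} (hx : 0 ≤ x) : x ^ (3 / 2 : ℝ) = x * √x := by
  rw [show (3 / 2 : ℝ) = 1 + 1 / 2 by norm_num, rpow_add' hx (by norm_num), rpow_one,
    sqrt_eq_rpow]

theorem inv_rpow_three_halves_le {x : ℝ} (hx : 0 < x) :
    ((x + 1) ^ (3 / 2 : ℝ))⁻¹ ≤ 2 * ((√x)⁻¹ - (√(x + 1))⁻¹) := by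
  rw [rpow_three_halves (by positivity)]
  set a := √x
  set b := √(x + 1)
  have ha : 0 < a := sqrt_pos.2 hx
  have hab : a ≤ b := sqrt_le_sqrt (by linarith)
  have ha2 : a ^ 2 = x := sq_sqrt hx.le
  have hb2 : b ^ 2 = x + 1 := sq_sqrt (by linarith)
  -- `b² - a² = 1`, so `2 (1/a - 1/b) = 2 / (a b (a + b)) ≥ 1 / b³`
  rw [← hb2, inv_le_iff_one_le_mul₀ (by positivity)]
  have : 2 * (a⁻¹ - b⁻¹) * (b ^ 2 * b) = 2 * b ^ 2 * (b - a) / a := by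
    have : 0 < b := ha.trans_le hab
    field_simp
  rw [this, le_div_iff₀ ha]
  nlinarith [mul_le_mul_of_nonneg_left hab ha.le]

theorem tsum_inv_rpow_three_halves_le {x : ℝ} (hx : 0 < x) :
    ∑' j : ℕ, ((x + 1 + j) ^ (3 / 2 : ℝ))⁻¹ ≤ 2 / √x := by
  refine Real.tsum_le_of_sum_range_le (fun j => by positivity) fun M => ?_
  calc ∑ j ∈ range M, ((x + 1 + j) ^ (3 / 2 : ℝ))⁻¹
      ≤ ∑ j ∈ range M, (2 * (√(x + j))⁻¹ - 2 * (√(x + (j + 1 : ℕ)))⁻¹) := by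
        refine sum_le_sum fun j _ => ?_
        have := inv_rpow_three_halves_le (x := x + j) (by positivity)
        push_cast
        rw [show x + 1 + j = x + j + 1 by ring, show x + (j + 1) = x + j + 1 by ring]
        linarith
    _ = 2 * (√(x + (0 : ℕ)))⁻¹ - 2 * (√(x + M))⁻¹ :=
        sum_range_sub' (fun j => 2 * (√(x + j))⁻¹) M
    _ ≤ 2 / √x := by
        have : 0 ≤ 2 * (√(x + M))⁻¹ := by positivity
        rw [div_eq_mul_inv]; push_cast; rw [add_zero]; linarith

theorem summable_inv_one_add_rpow {p : ℝ} (hp : 1 < p) :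
    Summable fun k : ℕ => ((1 + (k : ℝ)) ^ p)⁻¹ := by
  refine ((summable_nat_add_iff 1).2 (Real.summable_nat_rpow_inv.2 hp)).congr fun k => ?_
  push_cast; rw [add_comm]

theorem sum_inv_sub_add_one_le_one_add_log (n : ℕ) :
    ∑ k ∈ range (n + 1), (((n - k : ℕ) : ℝ) + 1)⁻¹ ≤ 1 + log (n + 1) := by
  have h := harmonic_le_one_add_log (n + 1)
  have hrefl := sum_range_reflect (fun j : ℕ => ((j : ℝ) + 1)⁻¹) (n + 1)
  simp only [harmonic, Rat.cast_sum, Rat.cast_inv, Rat.cast_natCast, Nat.add_sub_cancel] at h hrefl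
  push_cast at h
  rwa [hrefl]

theorem log_add_one_le_two_mul_log {x : ℝ} (hx : 2 ≤ x) : log (x + 1) ≤ 2 * log x := by
  rw [← log_rpow (by linarith)]
  exact log_le_log (by linarith) (by norm_cast; nlinarith)

theorem sqrt_log_div_mul_sqrt {x : ℝ} (hx : 1 ≤ x) :
    √(log x / (x * √x)) = x ^ (-(3 : ℝ) / 4) * log x ^ ((1 : ℝ) / 2) := by
  have hx0 : 0 < x := by linarith
  rw [sqrt_div' _ (by positivity), ← rpow_three_halves hx0.le, sqrt_eq_rpow, sqrt_eq_rpow,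
    ← rpow_mul hx0.le, div_eq_mul_inv, ← rpow_neg hx0.le, mul_comm]
  norm_num

theorem Ecoef_pos (m : ℕ) : 0 < Ecoef m := by
  unfold Ecoef
  have : 0 < (2 * m).choose m := Nat.choose_pos (by omega)
  positivity

theorem Ecoef_succ (m : ℕ) : Ecoef (m + 1) = Ecoef m * (2 * m + 1) / (2 * m + 2) := by
  have h : ((m : ℝ) + 1) * ((2 * (m + 1)).choose (m + 1) : ℝ)
      = 2 * (2 * m + 1) * ((2 * m).choose m : ℝ) := by
    exact_mod_cast Nat.succ_mul_centralBinom_succ m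
  unfold Ecoef
  rw [pow_succ]
  field_simp
  linear_combination 2 * h

theorem Ecoef_sub_succ (m : ℕ) : Ecoef m - Ecoef (m + 1) = Ecoef m / (2 * (m + 1)) := by
  rw [Ecoef_succ]; field_simp; ring

theorem Ecoef_antitone : Antitone Ecoef :=
  antitone_nat_of_succ_le fun m => by
    rw [← sub_nonneg, Ecoef_sub_succ]; have := Ecoef_pos m; positivity

theorem Ecoef_le_one (m : ℕ) : Ecoef m ≤ 1 := by
  simpa [Ecoef] using Ecoef_antitone (Nat.zero_le m)

theorem Ecoef_sq_le (m : ℕ) : Ecoef m ^ 2 ≤ ((m : ℝ) + 1)⁻¹ := by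
  induction m with
  | zero => simp [Ecoef]
  | succ m ih =>
    rw [Ecoef_succ, div_pow, mul_pow, div_le_iff₀ (by positivity)]
    push_cast
    calc Ecoef m ^ 2 * (2 * m + 1) ^ 2 ≤ ((m : ℝ) + 1)⁻¹ * (2 * m + 1) ^ 2 := by gcongr
      _ ≤ _ := by
        rw [inv_mul_le_iff₀ (by positivity)]
        field_simp
        nlinarith

theorem Ecoef_sub_add_le (m k : ℕ) :
    Ecoef m - Ecoef (m + k) ≤ k * (Ecoef m / (2 * (m + 1))) := by
  induction k with
  | zero => simp
  | succ k ih =>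
    have step := Ecoef_sub_succ (m + k)
    have hmono : Ecoef (m + k) / (2 * ((m + k : ℕ) + 1)) ≤ Ecoef m / (2 * (m + 1)) := by
      gcongr
      · exact (Ecoef_pos m).le
      · exact Ecoef_antitone (Nat.le_add_right m k)
      · simp
    rw [← add_assoc]; push_cast at step hmono ⊢
    linarith [add_one_mul (k : ℝ) (Ecoef m / (2 * (m + 1)))]

theorem Ecoef_sub_sq_div_le_of_two_mul_le {n k : ℕ} (hn : 2 ≤ n) (hk : 2 * k ≤ n) :
    (Ecoef (n - k) - Ecoef n) ^ 2 / (1 + k) ^ (3 / 2 : ℝ) ≤ 2 / (n ^ 2 * √n) := by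
  obtain ⟨m, rfl⟩ : ∃ m, n = m + k := ⟨n - k, by omega⟩
  rw [Nat.add_sub_cancel, rpow_three_halves (by positivity)]
  have hm : ((m + k : ℕ) : ℝ) ≤ 2 * (m + 1) := by
    exact_mod_cast (by omega : m + k ≤ 2 * (m + 1))
  have hN : (0 : ℝ) < (m + k : ℕ) := by exact_mod_cast (by omega : 0 < m + k)
  have hk1 : (1 : ℝ) + k ≤ (m + k : ℕ) := by exact_mod_cast (by omega : 1 + k ≤ m + k)
  have hg0 : 0 ≤ Ecoef m - Ecoef (m + k) := sub_nonneg.2 (Ecoef_antitone (Nat.le_add_right m k))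
  have hsq : (Ecoef m - Ecoef (m + k)) ^ 2 ≤ 2 * k ^ 2 / ((m + k : ℕ) : ℝ) ^ 3 := by
    calc (Ecoef m - Ecoef (m + k)) ^ 2 ≤ (k * (Ecoef m / (2 * (m + 1)))) ^ 2 := by
          gcongr; exact Ecoef_sub_add_le m k
      _ = k ^ 2 * Ecoef m ^ 2 / (4 * (m + 1) ^ 2) := by
          rw [mul_pow, div_pow, mul_pow]; ring
      _ ≤ k ^ 2 * ((m : ℝ) + 1)⁻¹ / (4 * (m + 1) ^ 2) := by gcongr; exact Ecoef_sq_le m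
      _ = 2 * k ^ 2 / (2 * (m + 1)) ^ 3 := by field_simp; ring
      _ ≤ 2 * k ^ 2 / ((m + k : ℕ) : ℝ) ^ 3 := by gcongr
  set N : ℝ := ((m + k : ℕ) : ℝ)
  have hsk : √(1 + k) ≤ √N := sqrt_le_sqrt hk1
  have hsN : 0 < √N := sqrt_pos.2 hN
  have hsN2 : √N ^ 2 = N := sq_sqrt hN.le
  have hsk2 : √(1 + (k : ℝ)) ^ 2 = 1 + k := sq_sqrt (by positivity)
  rw [div_le_div_iff₀ (by positivity) (by positivity)]
  calc (Ecoef m - Ecoef (m + k)) ^ 2 * (N ^ 2 * √N) ≤ 2 * k ^ 2 / N ^ 3 * (N ^ 2 * √N) := by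
        gcongr
    _ = 2 * k ^ 2 / √N := by field_simp; rw [hsN2]
    _ ≤ 2 * ((1 + k) * √(1 + k)) := by
        rw [div_le_iff₀ hsN]
        have hw : (0 : ℝ) ≤ (1 + k) * √(1 + k) := by positivity
        nlinarith [mul_le_mul_of_nonneg_left hsk hw]

theorem Ecoef_sub_sq_div_le_of_lt_two_mul {n k : ℕ} (hkn : k ≤ n) (hk : n < 2 * k) :
    (Ecoef (n - k) - Ecoef n) ^ 2 / (1 + k) ^ (3 / 2 : ℝ)
      ≤ 4 / (n * √n) * (((n - k : ℕ) : ℝ) + 1)⁻¹ := by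
  rw [rpow_three_halves (by positivity)]
  have hN : (0 : ℝ) < n := by exact_mod_cast (by omega : 0 < n)
  have hkN : (n : ℝ) / 2 ≤ 1 + k := by
    rw [div_le_iff₀ two_pos]; exact_mod_cast (by omega : n ≤ (1 + k) * 2)
  have hsq : (Ecoef (n - k) - Ecoef n) ^ 2 ≤ (((n - k : ℕ) : ℝ) + 1)⁻¹ := by
    refine le_trans ?_ (Ecoef_sq_le (n - k))
    have := (Ecoef_pos n).le
    gcongr
    · exact sub_nonneg.2 (Ecoef_antitone (Nat.sub_le n k))
    · linarith
  have hw : n * √n / 4 ≤ (1 + k) * √(1 + k) := by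
    have hsqrt : √n / 2 ≤ √(1 + k) := by
      rw [le_sqrt (by positivity) (by positivity), div_pow, sq_sqrt hN.le]; linarith
    calc n * √n / 4 = (n / 2) * (√n / 2) := by ring
      _ ≤ _ := by gcongr
  calc (Ecoef (n - k) - Ecoef n) ^ 2 / ((1 + k) * √(1 + k))
      ≤ (((n - k : ℕ) : ℝ) + 1)⁻¹ / (n * √n / 4) := by gcongr
    _ = 4 / (n * √n) * (((n - k : ℕ) : ℝ) + 1)⁻¹ := by field_simp

theorem sum_Ecoef_sub_sq_div_le {n : ℕ} (hn : 2 ≤ n) :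
    ∑ k ∈ range (n + 1), (Ecoef (n - k) - Ecoef n) ^ 2 / (1 + k) ^ (3 / 2 : ℝ)
      ≤ (7 + 4 * log (n + 1)) / (n * √n) := by
  have hN : (0 : ℝ) < n := by exact_mod_cast (by omega : 0 < n)
  have hpoint : ∀ k ∈ range (n + 1), (Ecoef (n - k) - Ecoef n) ^ 2 / (1 + k) ^ (3 / 2 : ℝ)
      ≤ 2 / (n ^ 2 * √n) + 4 / (n * √n) * (((n - k : ℕ) : ℝ) + 1)⁻¹ := by
    intro k hk
    have hkn : k ≤ n := Nat.lt_succ_iff.1 (mem_range.1 hk)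
    have h1 : 0 ≤ 2 / ((n : ℝ) ^ 2 * √n) := by positivity
    have h2 : 0 ≤ 4 / (n * √n) * (((n - k : ℕ) : ℝ) + 1)⁻¹ := by positivity
    rcases le_or_gt (2 * k) n with hk2 | hk2
    · linarith [Ecoef_sub_sq_div_le_of_two_mul_le hn hk2]
    · linarith [Ecoef_sub_sq_div_le_of_lt_two_mul hkn hk2]
  calc _ ≤ ∑ k ∈ range (n + 1),
          (2 / (n ^ 2 * √n) + 4 / (n * √n) * (((n - k : ℕ) : ℝ) + 1)⁻¹) :=
        sum_le_sum hpoint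
    _ = (n + 1) * 2 / n / (n * √n)
          + 4 / (n * √n) * ∑ k ∈ range (n + 1), (((n - k : ℕ) : ℝ) + 1)⁻¹ := by
        rw [sum_add_distrib, ← mul_sum, sum_const, card_range, nsmul_eq_mul]
        push_cast
        field_simp
    _ ≤ 3 / (n * √n) + 4 / (n * √n) * (1 + log (n + 1)) := by
        gcongr
        · rw [div_le_iff₀ hN]
          have : (2 : ℝ) ≤ n := by exact_mod_cast hn
          linarith
        · exact sum_inv_sub_add_one_le_one_add_log n
    _ = (7 + 4 * log (n + 1)) / (n * √n) := by ring

noncomputable def centeredKernel (n k : ℕ) : ℝ :=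
  (if k ≤ n then Ecoef (n - k) else 0) - Ecoef n

theorem sum_Ecoef_mul_eq_tsum_centeredKernel_mul {f : ℕ → ℝ} (hf : Summable f)
    (hf0 : ∑' k, f k = 0) (n : ℕ) :
    ∑ k ∈ range (n + 1), Ecoef (n - k) * f k = ∑' k, centeredKernel n k * f k := by
  have hsupp : ∀ k ∉ range (n + 1), (if k ≤ n then Ecoef (n - k) else 0) * f k = 0 := by
    intro k hk
    rw [if_neg (by simpa [Nat.lt_succ_iff] using hk), zero_mul]
  simp only [centeredKernel, sub_mul]
  rw [(summable_of_ne_finset_zero hsupp).tsum_sub (hf.mul_left _), tsum_mul_left, hf0, mul_zero,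
    sub_zero, tsum_eq_sum hsupp]
  exact sum_congr rfl fun k hk => by rw [if_pos (by simpa [Nat.lt_succ_iff] using hk)]

theorem centeredKernel_sq_le_one (n k : ℕ) : centeredKernel n k ^ 2 ≤ 1 := by
  have := Ecoef_pos n
  have := Ecoef_le_one n
  rw [sq_le_one_iff_abs_le_one, abs_le, centeredKernel]
  split_ifs
  · have := Ecoef_pos (n - k)
    have := Ecoef_le_one (n - k)
    constructor <;> linarith
  · constructor <;> linarith

theorem summable_centeredKernel_sq_div (n : ℕ) :
    Summable fun k : ℕ => centeredKernel n k ^ 2 / (1 + k) ^ (3 / 2 : ℝ) := by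
  refine (summable_inv_one_add_rpow (by norm_num : (1 : ℝ) < 3 / 2)).of_nonneg_of_le
    (fun k => by positivity) fun k => ?_
  rw [div_eq_mul_inv]
  exact mul_le_of_le_one_left (by positivity) (centeredKernel_sq_le_one n k)

theorem tsum_centeredKernel_sq_div_le {n : ℕ} (hn : 2 ≤ n) :
    ∑' k, centeredKernel n k ^ 2 / (1 + k) ^ (3 / 2 : ℝ)
      ≤ (9 + 4 * log (n + 1)) / (n * √n) := by
  rw [← (summable_centeredKernel_sq_div n).sum_add_tsum_nat_add (n + 1)]
  have hhead : ∑ k ∈ range (n + 1), centeredKernel n k ^ 2 / (1 + k) ^ (3 / 2 : ℝ)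
      = ∑ k ∈ range (n + 1), (Ecoef (n - k) - Ecoef n) ^ 2 / (1 + k) ^ (3 / 2 : ℝ) :=
    sum_congr rfl fun k hk => by
      rw [centeredKernel, if_pos (Nat.lt_succ_iff.1 (mem_range.1 hk))]
  have htail : ∑' k, centeredKernel n (k + (n + 1)) ^ 2
      / (1 + ((k + (n + 1) : ℕ) : ℝ)) ^ (3 / 2 : ℝ) ≤ 2 / (n * √n) := by
    have hEn := Ecoef_sq_le n
    calc _ = Ecoef n ^ 2 * ∑' k : ℕ, (((n + 1 : ℝ) + 1 + k) ^ (3 / 2 : ℝ))⁻¹ := by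
          rw [← tsum_mul_left]
          refine tsum_congr fun k => ?_
          rw [centeredKernel, if_neg (by omega), zero_sub, neg_sq, div_eq_mul_inv]
          push_cast; ring_nf
      _ ≤ ((n : ℝ) + 1)⁻¹ * (2 / √(n + 1)) := by
          gcongr
          exact tsum_inv_rpow_three_halves_le (by positivity)
      _ ≤ 2 / (n * √n) := by
          rw [inv_mul_eq_div, div_div, mul_comm (√((n : ℝ) + 1))]
          gcongr <;> linarith
  rw [hhead, show (9 + 4 * log (n + 1)) / (n * √n) = (7 + 4 * log (n + 1)) / (n * √n)
    + 2 / (n * √n) by ring]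
  exact add_le_add (sum_Ecoef_sub_sq_div_le hn) htail

theorem tsum_centeredKernel_sq_div_le_log {n : ℕ} (hn : 2 ≤ n) :
    ∑' k, centeredKernel n k ^ 2 / (1 + k) ^ (3 / 2 : ℝ) ≤ 26 * log n / (n * √n) := by
  have hN : (2 : ℝ) ≤ n := by exact_mod_cast hn
  have hlog : 1 ≤ 2 * log n := by
    linarith [log_two_gt_d9, log_le_log two_pos hN]
  refine (tsum_centeredKernel_sq_div_le hn).trans ?_
  gcongr
  linarith [log_add_one_le_two_mul_log hN]

/-- If `(f_k)` is real with `Σ (1+k)^{3/2} f_k² < ∞` and `Σ f_k = 0` (absolutely convergent),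
and `h_n = Σ_{k=0}^n E_{n-k} f_k`, then `|h_n| ≤ C n^{-3/4} (log n)^{1/2}` for all `n ≥ 2`. -/
theorem stmt0 (f : ℕ → ℝ)
    (hf2 : Summable (fun k : ℕ => (1 + (k : ℝ)) ^ ((3 : ℝ) / 2) * (f k) ^ 2))
    (hfabs : Summable (fun k : ℕ => |f k|))
    (hfsum : (∑' k : ℕ, f k) = 0) :
    ∃ C : ℝ, 0 < C ∧ ∀ n : ℕ, 2 ≤ n →
      |∑ k ∈ Finset.range (n + 1), Ecoef (n - k) * f k|
        ≤ C * (n : ℝ) ^ (-(3 : ℝ) / 4) * (Real.log n) ^ ((1 : ℝ) / 2) := by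
  set A := ∑' k : ℕ, (1 + (k : ℝ)) ^ ((3 : ℝ) / 2) * f k ^ 2
  have hA : 0 ≤ A := tsum_nonneg fun k => by positivity
  refine ⟨√(26 * (A + 1)), by positivity, fun n hn => ?_⟩
  have hN : (1 : ℝ) ≤ n := by exact_mod_cast (by omega : 1 ≤ n)
  have hB : 0 ≤ log n / (n * √n) := by have := log_nonneg hN; positivity
  have key : (∑ k ∈ range (n + 1), Ecoef (n - k) * f k) ^ 2
      ≤ 26 * (A + 1) * (log n / (n * √n)) := by
    rw [sum_Ecoef_mul_eq_tsum_centeredKernel_mul hfabs.of_abs hfsum n]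
    calc _ ≤ A * ∑' k, centeredKernel n k ^ 2 / (1 + k) ^ (3 / 2 : ℝ) :=
          sq_tsum_mul_le_tsum_mul_tsum (fun k => by positivity) hf2
            (summable_centeredKernel_sq_div n)
      _ ≤ A * (26 * (log n / (n * √n))) := by
          rw [← mul_div_assoc]; gcongr; exact tsum_centeredKernel_sq_div_le_log hn
      _ ≤ 26 * (A + 1) * (log n / (n * √n)) := by nlinarith
  calc _ ≤ √(26 * (A + 1) * (log n / (n * √n))) := abs_le_sqrt key
    _ = _ := by rw [sqrt_mul (by positivity), sqrt_log_div_mul_sqrt hN, mul_assoc]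
end

section
/- For all integers k, m ≥ 0: ∫_0^∞ ψ⁰_{2m+1}(x) ψ⁰_{2k}(x) dx = (1/√(2π)) · ((−1)^{m−k}/(2(m−k)+1)) · √((2m+1) E_m E_k). -/
open scoped BigOperators

/-- Physicists' Hermite polynomials: `H_0 = 1`, `H_{n+1}(x) = 2x H_n(x) - H_n'(x)`. -/
noncomputable def hermiteH : ℕ → Polynomial ℝ
  | 0 => 1
  | n + 1 => Polynomial.C 2 * Polynomial.X * hermiteH n - Polynomial.derivative (hermiteH n)

/-- The `n`-th Hermite function `ψ⁰_n(x) = (2^n n! √π)^{-1/2} H_n(x) e^{-x²/2}`. -/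
noncomputable def psi0 (n : ℕ) (x : ℝ) : ℝ :=
  (Real.sqrt ((2 : ℝ) ^ n * (n.factorial : ℝ) * Real.sqrt Real.pi))⁻¹ *
    (hermiteH n).eval x * Real.exp (-x ^ 2 / 2)

open MeasureTheory Real Set Filter

namespace Stmt5Aux

/-- integrability of polynomial times Gaussian on `Ioi 0`. -/
lemma intOn (P : Polynomial ℝ) :
    IntegrableOn (fun x => P.eval x * Real.exp (-x ^ 2)) (Set.Ioi (0:ℝ)) := by
  induction P using Polynomial.induction_on' with
  | add p q hp hq =>
      simpa [add_mul, Pi.add_def] using hp.add hq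
  | monomial n a =>
      have hs : (-1 : ℝ) < (n : ℝ) := lt_of_lt_of_le (by norm_num) (Nat.cast_nonneg n)
      have h := (integrableOn_rpow_mul_exp_neg_mul_sq one_pos hs).const_mul a
      simp_rw [Real.rpow_natCast, neg_one_mul] at h
      refine IntegrableOn.congr_fun h (fun x _ => ?_) measurableSet_Ioi
      simp [Polynomial.eval_monomial, mul_assoc]

lemma tendsto0 (P : Polynomial ℝ) :
    Tendsto (fun x => P.eval x * Real.exp (-x ^ 2)) atTop (nhds 0) := by
  have h1 : Tendsto (fun x : ℝ => P.eval x / Real.exp x) atTop (nhds 0) :=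
    P.tendsto_div_exp_atTop
  have h2 : Tendsto (fun x : ℝ => Real.exp (x - x ^ 2)) atTop (nhds 0) := by
    apply Real.tendsto_exp_atBot.comp
    refine tendsto_atBot_mono' atTop (f₁ := fun x : ℝ => -x + 2) ?_ ?_
    · filter_upwards with x
      nlinarith [sq_nonneg (x - 1)]
    · exact tendsto_atBot_add_const_right _ 2 tendsto_neg_atTop_atBot
  have h := h1.mul h2
  rw [zero_mul] at h
  refine h.congr fun x => ?_
  rw [Real.exp_sub, Real.exp_neg]
  field_simp

end Stmt5Aux

namespace Stmt5Aux

lemma deriv_hermiteH : ∀ n : ℕ,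
    Polynomial.derivative (hermiteH (n + 1)) = Polynomial.C (2 * (n + 1) : ℝ) * hermiteH n
  | 0 => by
      simp [hermiteH]
  | (n + 1) => by
      have ih := deriv_hermiteH n
      show Polynomial.derivative (hermiteH (n + 2)) = _
      rw [show hermiteH (n + 2) = Polynomial.C 2 * Polynomial.X * hermiteH (n+1)
          - Polynomial.derivative (hermiteH (n+1)) from rfl]
      simp only [Polynomial.derivative_sub, Polynomial.derivative_mul,
        Polynomial.derivative_C, Polynomial.derivative_X, ih]
      rw [show hermiteH (n + 1) = Polynomial.C 2 * Polynomial.X * hermiteH n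
          - Polynomial.derivative (hermiteH n) from rfl]
      push_cast
      rw [show (2 * ((n:ℝ) + 1 + 1)) = (2 * ((n:ℝ)+1)) + 2 from by ring, Polynomial.C_add]
      ring

lemma eval0_odd : ∀ m : ℕ, (hermiteH (2 * m + 1)).eval 0 = 0
  | 0 => by simp [hermiteH]
  | (m + 1) => by
      have ih := eval0_odd m
      have : hermiteH (2 * (m + 1) + 1) = Polynomial.C 2 * Polynomial.X * hermiteH (2*m+2)
          - Polynomial.derivative (hermiteH (2*m+2)) := by
        rw [show 2 * (m+1) + 1 = (2*m+2) + 1 from by ring]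
        rfl
      rw [this, deriv_hermiteH (2*m+1)]
      simp [ih]

lemma eval0_even : ∀ m : ℕ,
    (hermiteH (2 * m)).eval 0 = (-1 : ℝ) ^ m * (Nat.factorial (2 * m)) / (Nat.factorial m)
  | 0 => by simp [hermiteH]
  | (m + 1) => by
      have ih := eval0_even m
      have : hermiteH (2 * (m + 1)) = Polynomial.C 2 * Polynomial.X * hermiteH (2*m+1)
          - Polynomial.derivative (hermiteH (2*m+1)) := by
        rw [show 2 * (m+1) = (2*m+1) + 1 from by ring]
        rfl
      rw [this, deriv_hermiteH (2*m)]
      simp only [Polynomial.eval_sub, Polynomial.eval_mul, Polynomial.eval_C, Polynomial.eval_X,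
        mul_zero, zero_mul, zero_sub]
      rw [ih]
      have h1 : (Nat.factorial (2 * (m+1)) : ℝ) = (2*m+2) * ((2*m+1) * Nat.factorial (2*m)) := by
        rw [show 2 * (m+1) = (2*m) + 1 + 1 from by ring]
        push_cast [Nat.factorial_succ]
        ring
      have h2 : (Nat.factorial (m+1) : ℝ) = (m+1) * Nat.factorial m := by
        push_cast [Nat.factorial_succ]; ring
      have hm : (Nat.factorial m : ℝ) ≠ 0 := by positivity
      rw [h1, h2]
      field_simp
      push_cast
      ring

end Stmt5Aux

namespace Stmt5Aux

noncomputable def J (n j : ℕ) : ℝ :=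
  ∫ x in Set.Ioi (0:ℝ), (hermiteH n).eval x * (hermiteH j).eval x * Real.exp (-x ^ 2)

lemma J_symm (n j : ℕ) : J n j = J j n := by
  unfold J
  congr 1
  funext x
  ring

lemma hasDeriv (j : ℕ) (x : ℝ) :
    HasDerivAt (fun y => (hermiteH j).eval y * Real.exp (-y ^ 2))
      (-((hermiteH (j + 1)).eval x * Real.exp (-x ^ 2))) x := by
  have hp := (hermiteH j).hasDerivAt x
  have h1 : HasDerivAt (fun y : ℝ => -y ^ 2) (-(2 * x)) x := by
    simpa using (hasDerivAt_pow 2 x).fun_neg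
  have he := h1.exp
  have h := hp.fun_mul he
  refine h.congr_deriv ?_
  rw [show hermiteH (j + 1) = Polynomial.C 2 * Polynomial.X * hermiteH j
      - Polynomial.derivative (hermiteH j) from rfl]
  simp only [Polynomial.eval_sub, Polynomial.eval_mul, Polynomial.eval_C, Polynomial.eval_X]
  ring

/-- integration by parts step -/
lemma key (n j : ℕ) :
    J n (j + 1) = (hermiteH n).eval 0 * (hermiteH j).eval 0
      + ∫ x in Set.Ioi (0:ℝ), (Polynomial.derivative (hermiteH n)).eval x *
          (hermiteH j).eval x * Real.exp (-x ^ 2) := by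
  set Q : Polynomial ℝ := Polynomial.derivative (hermiteH n) * hermiteH j
    - hermiteH n * hermiteH (j + 1) with hQ
  have hderiv : ∀ x ∈ Set.Ici (0:ℝ),
      HasDerivAt (fun y => (hermiteH n).eval y * ((hermiteH j).eval y * Real.exp (-y ^ 2)))
        (Q.eval x * Real.exp (-x ^ 2)) x := by
    intro x _
    have h := ((hermiteH n).hasDerivAt x).fun_mul (hasDeriv j x)
    refine h.congr_deriv ?_
    simp only [hQ, Polynomial.eval_sub, Polynomial.eval_mul]
    ring
  have hint : IntegrableOn (fun x => Q.eval x * Real.exp (-x ^ 2)) (Set.Ioi (0:ℝ)) := intOn Q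
  have htend : Tendsto (fun y => (hermiteH n).eval y * ((hermiteH j).eval y * Real.exp (-y ^ 2)))
      atTop (nhds 0) := by
    have := tendsto0 (hermiteH n * hermiteH j)
    refine this.congr fun x => ?_
    simp only [Polynomial.eval_mul]
    ring
  have hftc := integral_Ioi_of_hasDerivAt_of_tendsto' hderiv hint htend
  have hsub : ∫ x in Set.Ioi (0:ℝ), Q.eval x * Real.exp (-x ^ 2)
      = (∫ x in Set.Ioi (0:ℝ), (Polynomial.derivative (hermiteH n)).eval x *
          (hermiteH j).eval x * Real.exp (-x ^ 2)) - J n (j + 1) := by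
    unfold J
    rw [← integral_sub]
    · congr 1
      funext x
      simp only [hQ, Polynomial.eval_sub, Polynomial.eval_mul]
      ring
    · have := intOn (Polynomial.derivative (hermiteH n) * hermiteH j)
      refine this.congr_fun (fun x _ => ?_) measurableSet_Ioi
      simp only [Polynomial.eval_mul]
    · have := intOn (hermiteH n * hermiteH (j + 1))
      refine this.congr_fun (fun x _ => ?_) measurableSet_Ioi
      simp only [Polynomial.eval_mul]
  rw [hsub] at hftc
  have : Real.exp (-(0:ℝ) ^ 2) = 1 := by norm_num
  rw [this] at hftc
  linarith [hftc]

end Stmt5Aux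

namespace Stmt5Aux

lemma R1 (j : ℕ) : J 0 (j + 1) = (hermiteH j).eval 0 := by
  have h := key 0 j
  have hd : Polynomial.derivative (hermiteH 0) = 0 := by simp [hermiteH]
  have h0 : (hermiteH 0).eval (0:ℝ) = 1 := by simp [hermiteH]
  rw [hd, h0] at h
  simpa using h

lemma R2 (n j : ℕ) : J (n + 1) (j + 1) = (hermiteH (n + 1)).eval 0 * (hermiteH j).eval 0
    + 2 * (n + 1) * J n j := by
  have h := key (n + 1) j
  rw [deriv_hermiteH n] at h
  rw [h]
  congr 1
  unfold J
  rw [← integral_const_mul]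
  congr 1
  funext x
  simp only [Polynomial.eval_mul, Polynomial.eval_C]
  push_cast
  ring

lemma A_base (m : ℕ) : J (2 * m + 1) 0 = (-1 : ℝ) ^ m * (Nat.factorial (2 * m)) / (Nat.factorial m) := by
  rw [J_symm, show 2 * m + 1 = (2 * m) + 1 from rfl, R1 (2 * m), eval0_even]

lemma A_rec (m k : ℕ) : J (2 * m + 2 + 1) (2 * k + 2)
    = 4 * (2 * (m:ℝ) + 3) * (2 * k + 1) * J (2 * m + 1) (2 * k) := by
  have h1 : J (2 * m + 2 + 1) (2 * k + 2) = (hermiteH (2*m+3)).eval 0 * (hermiteH (2*k+1)).eval 0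
      + 2 * ((2*m+2 : ℕ) + 1) * J (2*m+2) (2*k+1) := by
    have := R2 (2*m+2) (2*k+1)
    convert this using 3 <;> push_cast <;> ring
  have h2 : J (2*k+1) (2*m+2) = (hermiteH (2*k+1)).eval 0 * (hermiteH (2*m+1)).eval 0
      + 2 * ((2*k : ℕ) + 1) * J (2*k) (2*m+1) := by
    have := R2 (2*k) (2*m+1)
    convert this using 3 <;> push_cast <;> ring
  have ho1 : (hermiteH (2*m+3)).eval (0:ℝ) = 0 := by
    have := eval0_odd (m+1)
    rwa [show 2*(m+1)+1 = 2*m+3 from by ring] at this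
  have ho2 : (hermiteH (2*k+1)).eval (0:ℝ) = 0 := eval0_odd k
  rw [h1, ho1, J_symm (2*m+2) (2*k+1), h2, ho2, J_symm (2*k) (2*m+1)]
  push_cast
  ring

lemma denom_ne (m k : ℕ) : (2 * (m:ℝ) - 2 * (k:ℝ) + 1) ≠ 0 := by
  intro h
  have h2 : ((2 * (m:ℤ) - 2 * (k:ℤ) + 1 : ℤ) : ℝ) = 0 := by push_cast; linarith
  have := Int.cast_eq_zero.mp h2
  omega

lemma alg0 (F Kf c s : ℝ) (hKf : Kf ≠ 0) (hc1 : c + 1 ≠ 0) (hc2 : 2*c+1 ≠ 0) :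
    2 * (s * F / Kf) = -s / (-(2*(c+1)) + 1) * ((2*c+2)*((2*c+1)*F) / ((c+1)*Kf)) := by
  rw [show (-(2*(c+1))+1 : ℝ) = -(2*c+1) from by ring, neg_div_neg_eq, div_mul_div_comm,
    mul_comm (2:ℝ) (s * F / Kf), div_mul_eq_mul_div,
    div_eq_div_iff hKf (mul_ne_zero hc2 (mul_ne_zero hc1 hKf))]
  ring

lemma A_closed : ∀ k m : ℕ, J (2 * m + 1) (2 * k)
    = (-1 : ℝ) ^ (m + k) / (2 * (m:ℝ) - 2 * (k:ℝ) + 1)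
      * ((Nat.factorial (2 * m + 1) : ℝ) / (Nat.factorial m))
      * ((Nat.factorial (2 * k) : ℝ) / (Nat.factorial k)) := by
  intro k
  induction k with
  | zero =>
      intro m
      rw [show 2 * 0 = 0 from rfl, A_base m]
      have hf : (Nat.factorial (2 * m + 1) : ℝ) = (2 * m + 1) * Nat.factorial (2 * m) := by
        push_cast [Nat.factorial_succ]; ring
      have hm : (Nat.factorial m : ℝ) ≠ 0 := by positivity
      have hd : (2 * (m:ℝ) - 2 * (0:ℕ) + 1) ≠ 0 := denom_ne m 0
      rw [hf]
      push_cast at hd ⊢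
      norm_num at hd
      field_simp
      rw [sub_zero, add_zero, mul_div_assoc, div_self hd, mul_one]
  | succ k ih =>
      intro m
      match m with
      | 0 =>
          have h1 := R2 0 (2*k+1)
          have ho : (hermiteH (0+1)).eval (0:ℝ) = 0 := eval0_odd 0
          have hJ0 : J 0 (2*k+1) = (hermiteH (2*k)).eval 0 := R1 (2*k)
          rw [ho, hJ0, eval0_even k, zero_mul, zero_add] at h1
          rw [show (2*0+1 : ℕ) = 0+1 from rfl, show 2*(k+1) = 2*k+1+1 from by ring, h1]
          push_cast
          norm_num [Nat.factorial_one, Nat.factorial_zero, pow_succ]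
          have hfk : (Nat.factorial (2*k+1+1) : ℝ)
              = (2*(k:ℝ)+2) * ((2*(k:ℝ)+1) * Nat.factorial (2*k)) := by
            push_cast [Nat.factorial_succ]; ring
          have hfk2 : (Nat.factorial (k+1) : ℝ) = ((k:ℝ)+1) * Nat.factorial k := by
            push_cast [Nat.factorial_succ]; ring
          have hk : (Nat.factorial k : ℝ) ≠ 0 := by positivity
          have hk1 : ((k:ℝ) + 1) ≠ 0 := by positivity
          have h2k1 : (2*(k:ℝ)+1) ≠ 0 := by positivity
          rw [hfk, hfk2]
          exact alg0 _ _ _ _ hk hk1 h2k1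
      | m + 1 =>
          have hrec := A_rec m k
          have ih' := ih m
          rw [show 2*(m+1)+1 = 2*m+2+1 from by ring, show 2*(k+1) = 2*k+2 from by ring,
            hrec, ih']
          have hfm : (Nat.factorial (2*m+2+1) : ℝ)
              = (2*m+3) * ((2*m+2) * Nat.factorial (2*m+1)) := by
            rw [show 2*m+2+1 = (2*m+1) + 1 + 1 from by ring]
            push_cast [Nat.factorial_succ]; ring
          have hfk : (Nat.factorial (2*k+2) : ℝ)
              = (2*k+2) * ((2*k+1) * Nat.factorial (2*k)) := by
            rw [show 2*k+2 = (2*k) + 1 + 1 from by ring]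
            push_cast [Nat.factorial_succ]; ring
          have hfm2 : (Nat.factorial (m+1) : ℝ) = (m+1) * Nat.factorial m := by
            push_cast [Nat.factorial_succ]; ring
          have hfk2 : (Nat.factorial (k+1) : ℝ) = (k+1) * Nat.factorial k := by
            push_cast [Nat.factorial_succ]; ring
          have hm : (Nat.factorial m : ℝ) ≠ 0 := by positivity
          have hk : (Nat.factorial k : ℝ) ≠ 0 := by positivity
          have hd : (2 * ((m:ℝ)+1) - 2 * ((k:ℝ)+1) + 1) ≠ 0 := by
            have := denom_ne (m+1) (k+1); push_cast at this; convert this using 2 <;> ring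
          have hd2 : (2 * (m:ℝ) - 2 * (k:ℝ) + 1) ≠ 0 := denom_ne m k
          have hm1 : ((m:ℝ) + 1) ≠ 0 := by positivity
          have hk1 : ((k:ℝ) + 1) ≠ 0 := by positivity
          rw [hfm, hfk, hfm2, hfk2]
          push_cast
          rw [show (-1:ℝ) ^ (m + 1 + (k+1)) = (-1:ℝ) ^ (m + k) from by
            rw [show m + 1 + (k+1) = (m+k) + 2 from by ring, pow_add]; norm_num]
          rw [show 2 * ((m:ℝ)+1) - 2 * ((k:ℝ)+1) + 1 = 2 * (m:ℝ) - 2 * (k:ℝ) + 1 from by ring]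
          field_simp [hm, hk, hm1, hk1, hd2]
          ring

end Stmt5Aux

namespace Stmt5Aux

lemma sign_eq (m k : ℕ) : ((-1:ℝ)) ^ ((m:ℤ) - (k:ℤ)) = (-1:ℝ) ^ (m + k) := by
  rw [zpow_sub₀ (by norm_num : (-1:ℝ) ≠ 0), zpow_natCast, zpow_natCast, pow_add,
    div_eq_mul_inv, ← inv_pow, inv_neg, inv_one]

lemma prod_id (m k : ℕ) :
    (2 * (m:ℝ) + 1) * Ecoef m * Ecoef k
      * ((2:ℝ) ^ (2*m+1) * (Nat.factorial (2*m+1) : ℝ) * Real.sqrt Real.pi)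
      * ((2:ℝ) ^ (2*k) * (Nat.factorial (2*k) : ℝ) * Real.sqrt Real.pi)
    = 2 * Real.pi * (((Nat.factorial (2*m+1) : ℝ) / (Nat.factorial m))
        * ((Nat.factorial (2*k) : ℝ) / (Nat.factorial k))) ^ 2 := by
  have hcm : ((Nat.choose (2*m) m : ℕ) : ℝ) * (Nat.factorial m) * (Nat.factorial m)
      = (Nat.factorial (2*m) : ℝ) := by
    have h := Nat.choose_mul_factorial_mul_factorial (show m ≤ 2*m by omega)
    rw [show 2*m - m = m from by omega] at h
    exact_mod_cast congrArg (Nat.cast : ℕ → ℝ) h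
  have hck : ((Nat.choose (2*k) k : ℕ) : ℝ) * (Nat.factorial k) * (Nat.factorial k)
      = (Nat.factorial (2*k) : ℝ) := by
    have h := Nat.choose_mul_factorial_mul_factorial (show k ≤ 2*k by omega)
    rw [show 2*k - k = k from by omega] at h
    exact_mod_cast congrArg (Nat.cast : ℕ → ℝ) h
  have hfm : (Nat.factorial (2*m+1) : ℝ) = (2*(m:ℝ)+1) * (Nat.factorial (2*m)) := by
    push_cast [Nat.factorial_succ]; ring
  have hpi : Real.sqrt Real.pi * Real.sqrt Real.pi = Real.pi :=
    Real.mul_self_sqrt Real.pi_pos.le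
  have h4m : ((4:ℝ)) ^ m = 2 ^ (2*m) := by
    rw [show (4:ℝ) = 2^2 from by norm_num, ← pow_mul]
  have h4k : ((4:ℝ)) ^ k = 2 ^ (2*k) := by
    rw [show (4:ℝ) = 2^2 from by norm_num, ← pow_mul]
  have h2m1 : (2:ℝ) ^ (2*m+1) = 2 * 2 ^ (2*m) := by
    rw [pow_succ]; ring
  have hm : (Nat.factorial m : ℝ) ≠ 0 := by positivity
  have hk : (Nat.factorial k : ℝ) ≠ 0 := by positivity
  have hpow2m : ((2:ℝ)) ^ (2*m) ≠ 0 := by positivity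
  have hpow2k : ((2:ℝ)) ^ (2*k) ≠ 0 := by positivity
  unfold Ecoef
  rw [hfm, h4m, h4k, h2m1]
  rw [← hcm, ← hck]
  field_simp
  ring_nf
  simp only [Real.sq_sqrt Real.pi_pos.le]

end Stmt5Aux

namespace Stmt5Aux

lemma Ecoef_nonneg (m : ℕ) : 0 ≤ Ecoef m := by
  unfold Ecoef; positivity

lemma sqrt_step (m k : ℕ) :
    (Real.sqrt ((2:ℝ) ^ (2*m+1) * (Nat.factorial (2*m+1) : ℝ) * Real.sqrt Real.pi))⁻¹ *
    (Real.sqrt ((2:ℝ) ^ (2*k) * (Nat.factorial (2*k) : ℝ) * Real.sqrt Real.pi))⁻¹ *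
    (((Nat.factorial (2*m+1) : ℝ) / (Nat.factorial m))
      * ((Nat.factorial (2*k) : ℝ) / (Nat.factorial k)))
    = (1 / Real.sqrt (2 * Real.pi)) *
        Real.sqrt ((2 * (m:ℝ) + 1) * Ecoef m * Ecoef k) := by
  set P : ℝ := (2:ℝ) ^ (2*m+1) * (Nat.factorial (2*m+1) : ℝ) * Real.sqrt Real.pi with hPdef
  set Q : ℝ := (2:ℝ) ^ (2*k) * (Nat.factorial (2*k) : ℝ) * Real.sqrt Real.pi with hQdef
  set R : ℝ := ((Nat.factorial (2*m+1) : ℝ) / (Nat.factorial m))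
      * ((Nat.factorial (2*k) : ℝ) / (Nat.factorial k)) with hRdef
  set T : ℝ := (2 * (m:ℝ) + 1) * Ecoef m * Ecoef k with hTdef
  have hP : 0 < P := by
    rw [hPdef]
    have : (0:ℝ) < (Nat.factorial (2*m+1) : ℝ) := by positivity
    positivity
  have hQ : 0 < Q := by
    rw [hQdef]
    have : (0:ℝ) < (Nat.factorial (2*k) : ℝ) := by positivity
    positivity
  have hT : 0 ≤ T := by
    rw [hTdef]
    have h1 := Ecoef_nonneg m
    have h2 := Ecoef_nonneg k
    positivity
  have hR : 0 ≤ R := by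
    rw [hRdef]; positivity
  have hkey : T * (P * Q) = 2 * Real.pi * R ^ 2 := by
    rw [hTdef, hPdef, hQdef, hRdef]
    have := prod_id m k
    linarith [this]
  have h2pi : (0:ℝ) < 2 * Real.pi := by positivity
  rw [show (Real.sqrt P)⁻¹ * (Real.sqrt Q)⁻¹ * R = R / (Real.sqrt P * Real.sqrt Q) from by
    field_simp]
  rw [← Real.sqrt_mul hP.le Q]
  rw [one_div, inv_mul_eq_div]
  rw [div_eq_div_iff (Real.sqrt_pos.mpr (mul_pos hP hQ)).ne' (Real.sqrt_pos.mpr h2pi).ne']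
  rw [mul_comm (Real.sqrt T) (Real.sqrt (P*Q)), ← Real.sqrt_mul (mul_pos hP hQ).le T,
    mul_comm (P*Q) T, hkey]
  rw [Real.sqrt_mul h2pi.le, Real.sqrt_sq hR, mul_comm]

end Stmt5Aux


open Stmt5Aux

/-- `∫_0^∞ ψ⁰_{2m+1} ψ⁰_{2k} = (1/√(2π)) ((-1)^{m-k}/(2(m-k)+1)) √((2m+1) E_m E_k)`. -/
theorem stmt5 (k m : ℕ) :
    ∫ x in Set.Ioi (0 : ℝ), psi0 (2 * m + 1) x * psi0 (2 * k) x
      = (1 / Real.sqrt (2 * Real.pi)) *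
          ((-1 : ℝ) ^ ((m : ℤ) - (k : ℤ)) / (2 * ((m : ℝ) - (k : ℝ)) + 1)) *
          Real.sqrt ((2 * (m : ℝ) + 1) * Ecoef m * Ecoef k) := by
  have hpt : ∀ x : ℝ, psi0 (2*m+1) x * psi0 (2*k) x
      = ((Real.sqrt ((2:ℝ) ^ (2*m+1) * ((2*m+1).factorial : ℝ) * Real.sqrt Real.pi))⁻¹ *
         (Real.sqrt ((2:ℝ) ^ (2*k) * ((2*k).factorial : ℝ) * Real.sqrt Real.pi))⁻¹) *
        ((hermiteH (2*m+1)).eval x * (hermiteH (2*k)).eval x * Real.exp (-x^2)) := by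
    intro x
    have he : Real.exp (-x^2/2) * Real.exp (-x^2/2) = Real.exp (-x^2) := by
      rw [← Real.exp_add]
      congr 1
      ring
    unfold psi0
    rw [← he]
    ring
  simp only [hpt]
  rw [MeasureTheory.integral_const_mul]
  rw [show (∫ x in Set.Ioi (0:ℝ), (hermiteH (2*m+1)).eval x * (hermiteH (2*k)).eval x
      * Real.exp (-x^2)) = J (2*m+1) (2*k) from rfl]
  rw [A_closed k m, sign_eq m k]
  rw [show 2 * ((m:ℝ) - (k:ℝ)) + 1 = 2 * (m:ℝ) - 2 * (k:ℝ) + 1 from by ring]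
  calc _ = ((-1:ℝ) ^ (m+k) / (2 * (m:ℝ) - 2 * (k:ℝ) + 1)) *
        ((Real.sqrt ((2:ℝ) ^ (2*m+1) * ((2*m+1).factorial : ℝ) * Real.sqrt Real.pi))⁻¹ *
         (Real.sqrt ((2:ℝ) ^ (2*k) * ((2*k).factorial : ℝ) * Real.sqrt Real.pi))⁻¹ *
         (((Nat.factorial (2*m+1) : ℝ) / (Nat.factorial m))
           * ((Nat.factorial (2*k) : ℝ) / (Nat.factorial k)))) := by ring
    _ = _ := by rw [sqrt_step m k]; ring
end

section
/- Let ε ∈ (0, 1/2) and let (a_{nm})_{n,m≥0} be nonnegative real numbers such that for some C > 0: a_{nm} ≤ C (n+1)^{−1/2} (m+1)^{−1/2} for all n, m ≥ 0, and a_{nm} ≤ C (n+1)^{−1/2−ε/2} (m+1)^{−1/2} whenever m ≥ n + n^{1/2+ε}. Then for each k the double series S_k = Σ_{n=0}^{k} Σ_{m=k+1}^{∞} a_{nm}/(m−n) converges, and S_k → 0 as k → ∞. -/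
/-!
Fix a small `β > 0` and write `m = k + 1 + j`, `σ = 1/2 + ε`. Every term `a n m / (m - n)` is at
most `C w_k(n) (j+1)^(-(1+β))`, so the inner series converge and `S_k ≤ C Z ∑_{n≤k} w_k(n)` with
`Z = ∑_j (j+1)^(-(1+β))`. In the far region `m ≥ n + n^σ` the second hypothesis gives the weight
`(n+1)^(-1/2-ε/2) (k+1)^(-(1/2-β))`, whose sum over `n ≤ k` is `O(k^(β-ε/2))`. In the near region
`n > k/2` and `m - n < (k+1)^σ`; the first hypothesis gives `O(1/k)` per term, and the factor
`(k+1)^(σ/2) (k-n+1)^(-1/2) ≥ 1` replaces the indicator of the window `k - n + 1 < (k+1)^σ` by a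
weight whose sum is `O(k^(1/2))`, for a total `O(k^(σ(β+1/2)-1/2))`. Both exponents are negative
once `β` is small.
-/

open Real Filter Topology Finset

lemma one_sub_mul_rpow_neg_le_rpow_sub_rpow {s x : ℝ} (hs0 : 0 ≤ s) (hs1 : s ≤ 1) (hx : 0 ≤ x) :
    (1 - s) * (x + 1) ^ (-s) ≤ (x + 1) ^ (1 - s) - x ^ (1 - s) := by
  have hy : 0 < x + 1 := by linarith
  have hbern := rpow_one_add_le_one_add_mul_self (s := -(x + 1)⁻¹)
    (by rw [neg_le_neg_iff]; exact inv_le_one_of_one_le₀ (by linarith)) (p := 1 - s)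
    (by linarith) (by linarith)
  have hbase : 1 + -(x + 1)⁻¹ = x / (x + 1) := by field_simp; ring
  rw [hbase, div_rpow hx hy.le, div_le_iff₀ (by positivity)] at hbern
  have hpow : (x + 1) ^ (1 - s) * (x + 1)⁻¹ = (x + 1) ^ (-s) := by
    rw [← rpow_neg_one, ← rpow_add hy]; ring_nf
  nlinarith

lemma sum_range_rpow_neg_le {s : ℝ} (hs0 : 0 ≤ s) (hs1 : s < 1) (N : ℕ) :
    ∑ n ∈ range N, ((n : ℝ) + 1) ^ (-s) ≤ (N : ℝ) ^ (1 - s) / (1 - s) := by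
  rw [le_div_iff₀ (by linarith), sum_mul]
  calc ∑ n ∈ range N, ((n : ℝ) + 1) ^ (-s) * (1 - s)
      ≤ ∑ n ∈ range N, (((n + 1 : ℕ) : ℝ) ^ (1 - s) - (n : ℝ) ^ (1 - s)) :=
        sum_le_sum fun n _ => by
          push_cast
          linarith [one_sub_mul_rpow_neg_le_rpow_sub_rpow hs0 hs1.le n.cast_nonneg]
    _ = (N : ℝ) ^ (1 - s) := by
        rw [sum_range_sub (fun n : ℕ => (n : ℝ) ^ (1 - s))]
        simp [zero_rpow (by linarith : 1 - s ≠ 0)]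

lemma tendsto_natCast_add_one_rpow_neg {t : ℝ} (ht : 0 < t) :
    Tendsto (fun k : ℕ => ((k : ℝ) + 1) ^ (-t)) atTop (𝓝 0) :=
  (tendsto_rpow_neg_atTop ht).comp (tendsto_atTop_add_const_right _ 1 tendsto_natCast_atTop_atTop)

lemma tendsto_rpow_neg_mul_sum_range_rpow_neg {s t : ℝ} (hs0 : 0 ≤ s) (hs1 : s < 1)
    (hst : 1 - s < t) :
    Tendsto (fun k : ℕ => ((k : ℝ) + 1) ^ (-t) * ∑ n ∈ range (k + 1), ((n : ℝ) + 1) ^ (-s))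
      atTop (𝓝 0) := by
  have hlim := (tendsto_natCast_add_one_rpow_neg (sub_pos.2 hst)).div_const (1 - s)
  rw [zero_div] at hlim
  refine squeeze_zero (fun k => by positivity) (fun k => ?_) hlim
  have hk : (0 : ℝ) < k + 1 := by positivity
  calc ((k : ℝ) + 1) ^ (-t) * ∑ n ∈ range (k + 1), ((n : ℝ) + 1) ^ (-s)
      ≤ ((k : ℝ) + 1) ^ (-t) * (((k : ℝ) + 1) ^ (1 - s) / (1 - s)) := by
        gcongr
        exact_mod_cast sum_range_rpow_neg_le hs0 hs1 (k + 1)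
    _ = ((k : ℝ) + 1) ^ (-(t - (1 - s))) / (1 - s) := by
        rw [mul_div_assoc', ← rpow_add hk]; ring_nf

lemma sum_range_succ_reflect_cast {M : Type*} [AddCommMonoid M] (f : ℝ → M) (k : ℕ) :
    ∑ n ∈ range (k + 1), f ((k : ℝ) - n) = ∑ n ∈ range (k + 1), f n := by
  rw [← sum_range_reflect]
  refine sum_congr rfl fun n hn => ?_
  rw [add_tsub_cancel_right, Nat.cast_sub (Nat.lt_succ_iff.1 (mem_range.1 hn)), sub_sub_cancel]

lemma rpow_neg_half_div_le_of_far {k n j β : ℝ} (hn : 0 ≤ n) (hnk : n ≤ k) (hj : 0 ≤ j)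
    (hβ0 : 0 ≤ β) (hβ1 : β ≤ 1 / 2) :
    (k + 1 + j + 1) ^ (-(1 : ℝ) / 2) / (k + 1 + j - n) ≤
      (k + 1) ^ (-(1 / 2 - β)) * (j + 1) ^ (-(1 + β)) := by
  have hk : 0 < k + 1 := by linarith
  have hj1 : 0 < j + 1 := by linarith
  have hm : 0 < k + 1 + j + 1 := by linarith
  calc (k + 1 + j + 1) ^ (-(1 : ℝ) / 2) / (k + 1 + j - n)
      = (k + 1 + j + 1) ^ (-(1 / 2 - β)) * (k + 1 + j + 1) ^ (-β) / (k + 1 + j - n) := by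
        rw [← rpow_add hm]; ring_nf
    _ ≤ (k + 1) ^ (-(1 / 2 - β)) * (j + 1) ^ (-β) / (j + 1) := by
        gcongr ?_ * ?_ / ?_
        · exact rpow_le_rpow_of_nonpos hk (by linarith) (by linarith)
        · exact rpow_le_rpow_of_nonpos hj1 (by linarith) (by linarith)
        · linarith
    _ = (k + 1) ^ (-(1 / 2 - β)) * (j + 1) ^ (-(1 + β)) := by
        rw [mul_div_assoc, ← rpow_sub_one hj1.ne']; ring_nf

lemma rpow_neg_half_le_of_sq_le {K x : ℝ} (hK : 0 < K) (h : (K / 2) ^ 2 ≤ x) :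
    x ^ (-(1 : ℝ) / 2) ≤ 2 * K ^ (-(1 : ℝ)) := by
  calc x ^ (-(1 : ℝ) / 2) ≤ ((K / 2) ^ 2) ^ (-(1 : ℝ) / 2) :=
        rpow_le_rpow_of_nonpos (by positivity) h (by norm_num)
    _ = 2 * K ^ (-(1 : ℝ)) := by
        rw [neg_div, rpow_neg (by positivity), ← sqrt_eq_rpow, sqrt_sq (by positivity),
          rpow_neg_one]
        field_simp

lemma one_le_rpow_half_mul_rpow_neg_half {w T : ℝ} (hw : 0 < w) (h : w ≤ T) :
    1 ≤ T ^ (1 / 2 : ℝ) * w ^ (-(1 : ℝ) / 2) := by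
  calc (1 : ℝ) = w ^ (1 / 2 : ℝ) * w ^ (-(1 : ℝ) / 2) := by
        rw [← rpow_add hw]; norm_num
    _ ≤ T ^ (1 / 2 : ℝ) * w ^ (-(1 : ℝ) / 2) := by gcongr

lemma rpow_neg_half_mul_div_le_of_near {k n j σ β : ℝ} (hn : 0 ≤ n) (hnk : n ≤ k)
    (hj : 0 ≤ j) (hσ0 : 0 < σ) (hσ1 : σ ≤ 1) (hβ : 0 ≤ β) (hnear : k + 1 + j < n + n ^ σ) :
    (n + 1) ^ (-(1 : ℝ) / 2) * (k + 1 + j + 1) ^ (-(1 : ℝ) / 2) / (k + 1 + j - n) ≤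
      2 * (k + 1) ^ (-(1 - σ * (β + 1 / 2))) * (k - n + 1) ^ (-(1 : ℝ) / 2) *
        (j + 1) ^ (-(1 + β)) := by
  set K := k + 1
  set T := K ^ σ
  have hK : 0 < K := by linarith
  have hj1 : 0 < j + 1 := by linarith
  have hn1 : 1 ≤ n := by
    by_contra! h
    linarith [rpow_le_one hn h.le hσ0.le]
  have hnT : n ^ σ ≤ T := rpow_le_rpow hn (by linarith) hσ0.le
  have hnσ : n ^ σ ≤ n := by simpa using rpow_le_rpow_of_exponent_le hn1 hσ1
  have hprod : ((n + 1) * (K + j + 1)) ^ (-(1 : ℝ) / 2) ≤ 2 * K ^ (-(1 : ℝ)) :=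
    rpow_neg_half_le_of_sq_le hK (by nlinarith)
  have hinv : (K + j - n)⁻¹ ≤ T ^ β * (j + 1) ^ (-(1 + β)) := by
    calc (K + j - n)⁻¹ ≤ (j + 1) ^ β * (j + 1) ^ (-(1 + β)) := by
          rw [← rpow_add hj1, show β + -(1 + β) = -1 by ring, rpow_neg_one]
          gcongr; linarith
      _ ≤ T ^ β * (j + 1) ^ (-(1 + β)) := by
          gcongr; linarith
  have hone : 1 ≤ T ^ (1 / 2 : ℝ) * (k - n + 1) ^ (-(1 : ℝ) / 2) :=
    one_le_rpow_half_mul_rpow_neg_half (by linarith) (by linarith)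
  have hexp : K ^ (-(1 : ℝ)) * T ^ β * T ^ (1 / 2 : ℝ) = K ^ (-(1 - σ * (β + 1 / 2))) := by
    rw [← rpow_mul hK.le, ← rpow_mul hK.le, ← rpow_add hK, ← rpow_add hK]; ring_nf
  calc (n + 1) ^ (-(1 : ℝ) / 2) * (K + j + 1) ^ (-(1 : ℝ) / 2) / (K + j - n)
      = ((n + 1) * (K + j + 1)) ^ (-(1 : ℝ) / 2) * (K + j - n)⁻¹ := by
        rw [mul_rpow (by linarith) (by linarith), div_eq_mul_inv]
    _ ≤ 2 * K ^ (-(1 : ℝ)) * (T ^ β * (j + 1) ^ (-(1 + β))) :=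
        mul_le_mul hprod hinv (inv_nonneg.2 (by linarith)) (by positivity)
    _ ≤ 2 * K ^ (-(1 : ℝ)) * (T ^ β * (j + 1) ^ (-(1 + β))) *
          (T ^ (1 / 2 : ℝ) * (k - n + 1) ^ (-(1 : ℝ) / 2)) :=
        le_mul_of_one_le_right (by positivity) hone
    _ = 2 * K ^ (-(1 - σ * (β + 1 / 2))) * (k - n + 1) ^ (-(1 : ℝ) / 2) *
          (j + 1) ^ (-(1 + β)) := by
        rw [← hexp]; ring

lemma summable_natCast_add_one_rpow {p : ℝ} (hp : p < -1) :
    Summable (fun j : ℕ => ((j : ℝ) + 1) ^ p) := by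
  simpa using (summable_nat_add_iff 1).2 (summable_nat_rpow.2 hp)

/-- The weight `w_k(n)`: far-region part plus near-region part. -/
noncomputable def tailWeight (ε β : ℝ) (k n : ℕ) : ℝ :=
  ((n : ℝ) + 1) ^ (-(1 : ℝ) / 2 - ε / 2) * ((k : ℝ) + 1) ^ (-(1 / 2 - β)) +
    2 * ((k : ℝ) + 1) ^ (-(1 - (1 / 2 + ε) * (β + 1 / 2))) * ((k : ℝ) - n + 1) ^ (-(1 : ℝ) / 2)

lemma div_le_tailWeight {a : ℕ → ℕ → ℝ} {C ε β : ℝ} (hC : 0 ≤ C) (hσ0 : 0 < 1 / 2 + ε)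
    (hσ1 : 1 / 2 + ε ≤ 1) (hβ0 : 0 ≤ β) (hβ1 : β ≤ 1 / 2)
    (hb1 : ∀ n m : ℕ,
      a n m ≤ C * ((n : ℝ) + 1) ^ (-(1 : ℝ) / 2) * ((m : ℝ) + 1) ^ (-(1 : ℝ) / 2))
    (hb2 : ∀ n m : ℕ, (n : ℝ) + (n : ℝ) ^ ((1 : ℝ) / 2 + ε) ≤ (m : ℝ) →
      a n m ≤ C * ((n : ℝ) + 1) ^ (-(1 : ℝ) / 2 - ε / 2) * ((m : ℝ) + 1) ^ (-(1 : ℝ) / 2))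
    {k n : ℕ} (hn : n ≤ k) (j : ℕ) :
    a n (k + 1 + j) / ((k : ℝ) + 1 + j - n) ≤
      C * tailWeight ε β k n * ((j : ℝ) + 1) ^ (-(1 + β)) := by
  have hnk : (n : ℝ) ≤ k := by exact_mod_cast hn
  have hd : 0 ≤ (k : ℝ) + 1 + j - n := by linarith [j.cast_nonneg (α := ℝ)]
  have hm : ((k + 1 + j : ℕ) : ℝ) = k + 1 + j := by push_cast; ring
  unfold tailWeight
  set far := ((n : ℝ) + 1) ^ (-(1 : ℝ) / 2 - ε / 2) * ((k : ℝ) + 1) ^ (-(1 / 2 - β))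
  set near := 2 * ((k : ℝ) + 1) ^ (-(1 - (1 / 2 + ε) * (β + 1 / 2))) *
    ((k : ℝ) - n + 1) ^ (-(1 : ℝ) / 2)
  have hfar_nonneg : 0 ≤ far := by positivity
  have hnear_nonneg : 0 ≤ near := by
    have := rpow_nonneg (by linarith : (0 : ℝ) ≤ k - n + 1) (-(1 : ℝ) / 2)
    positivity
  by_cases hfar : (n : ℝ) + n ^ ((1 : ℝ) / 2 + ε) ≤ ((k + 1 + j : ℕ) : ℝ)
  · have ha := hb2 n _ hfar
    rw [hm] at ha
    calc a n (k + 1 + j) / ((k : ℝ) + 1 + j - n)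
        ≤ C * ((n : ℝ) + 1) ^ (-(1 : ℝ) / 2 - ε / 2) *
            (((k : ℝ) + 1 + j + 1) ^ (-(1 : ℝ) / 2) / ((k : ℝ) + 1 + j - n)) := by
          rw [← mul_div_assoc]; gcongr
      _ ≤ C * ((n : ℝ) + 1) ^ (-(1 : ℝ) / 2 - ε / 2) *
            (((k : ℝ) + 1) ^ (-(1 / 2 - β)) * ((j : ℝ) + 1) ^ (-(1 + β))) := by
          gcongr
          exact rpow_neg_half_div_le_of_far n.cast_nonneg hnk j.cast_nonneg hβ0 hβ1
      _ = C * far * ((j : ℝ) + 1) ^ (-(1 + β)) := by ring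
      _ ≤ C * (far + near) * ((j : ℝ) + 1) ^ (-(1 + β)) := by
          gcongr; exact le_add_of_nonneg_right hnear_nonneg
  · rw [not_le, hm] at hfar
    calc a n (k + 1 + j) / ((k : ℝ) + 1 + j - n)
        ≤ C * (((n : ℝ) + 1) ^ (-(1 : ℝ) / 2) * ((k : ℝ) + 1 + j + 1) ^ (-(1 : ℝ) / 2) /
            ((k : ℝ) + 1 + j - n)) :=
          (div_le_div_of_nonneg_right (hb1 _ _) hd).trans_eq (by rw [hm]; ring)
      _ ≤ C * (near * ((j : ℝ) + 1) ^ (-(1 + β))) := by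
          gcongr
          exact rpow_neg_half_mul_div_le_of_near n.cast_nonneg hnk j.cast_nonneg
            hσ0 hσ1 hβ0 hfar
      _ ≤ C * (far + near) * ((j : ℝ) + 1) ^ (-(1 + β)) := by
          rw [← mul_assoc]; gcongr; exact le_add_of_nonneg_left hfar_nonneg

lemma tendsto_sum_tailWeight {ε β : ℝ} (hε0 : 0 ≤ ε) (hε1 : ε < 1) (hβε : β < ε / 2)
    (hβσ : (1 / 2 + ε) * (β + 1 / 2) < 1 / 2) :
    Tendsto (fun k : ℕ => ∑ n ∈ range (k + 1), tailWeight ε β k n) atTop (𝓝 0) := by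
  have hfar := tendsto_rpow_neg_mul_sum_range_rpow_neg (s := 1 / 2 + ε / 2) (t := 1 / 2 - β)
    (by linarith) (by linarith) (by linarith)
  have hnear := tendsto_rpow_neg_mul_sum_range_rpow_neg (s := 1 / 2)
    (t := 1 - (1 / 2 + ε) * (β + 1 / 2)) (by norm_num) (by norm_num) (by linarith)
  rw [show -(1 / 2 + ε / 2) = -(1 : ℝ) / 2 - ε / 2 by ring] at hfar
  rw [show -(1 / 2 : ℝ) = -(1 : ℝ) / 2 by ring] at hnear
  replace hnear := hnear.congr fun k => congrArg (_ * ·)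
    (sum_range_succ_reflect_cast (fun x : ℝ => (x + 1) ^ (-(1 : ℝ) / 2)) k).symm
  have := hfar.add (hnear.const_mul 2)
  rw [mul_zero, add_zero] at this
  refine this.congr fun k => ?_
  simp only [tailWeight, sum_add_distrib, mul_sum]
  congr 1 <;> refine sum_congr rfl fun n _ => by ring

/-- Let `ε ∈ (0,1/2)` and `a_{nm} ≥ 0` satisfy `a_{nm} ≤ C(n+1)^{-1/2}(m+1)^{-1/2}` always
and `a_{nm} ≤ C(n+1)^{-1/2-ε/2}(m+1)^{-1/2}` whenever `m ≥ n + n^{1/2+ε}`. Then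
`S_k = Σ_{n=0}^k Σ_{m=k+1}^∞ a_{nm}/(m-n)` converges and `S_k → 0` as `k → ∞`. -/
theorem stmt17 (ε : ℝ) (hε : ε ∈ Set.Ioo (0 : ℝ) (1 / 2)) (a : ℕ → ℕ → ℝ)
    (hpos : ∀ n m : ℕ, 0 ≤ a n m) (C : ℝ) (hC : 0 < C)
    (hb1 : ∀ n m : ℕ,
      a n m ≤ C * ((n : ℝ) + 1) ^ (-(1 : ℝ) / 2) * ((m : ℝ) + 1) ^ (-(1 : ℝ) / 2))
    (hb2 : ∀ n m : ℕ, (n : ℝ) + (n : ℝ) ^ ((1 : ℝ) / 2 + ε) ≤ (m : ℝ) →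
      a n m ≤ C * ((n : ℝ) + 1) ^ (-(1 : ℝ) / 2 - ε / 2) * ((m : ℝ) + 1) ^ (-(1 : ℝ) / 2)) :
    (∀ k : ℕ, ∀ n ≤ k,
      Summable (fun j : ℕ => a n (k + 1 + j) / ((k : ℝ) + 1 + (j : ℝ) - (n : ℝ)))) ∧
    Filter.Tendsto (fun k : ℕ =>
        ∑ n ∈ Finset.range (k + 1),
          ∑' j : ℕ, a n (k + 1 + j) / ((k : ℝ) + 1 + (j : ℝ) - (n : ℝ)))
      Filter.atTop (nhds 0) := by
  obtain ⟨hε0, hε1⟩ := hε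
  obtain ⟨β, hβ0, hβ1, hβε, hβσ⟩ :
      ∃ β : ℝ, 0 < β ∧ β ≤ 1 / 2 ∧ β < ε / 2 ∧ (1 / 2 + ε) * (β + 1 / 2) < 1 / 2 :=
    -- the last condition reduces to `(1 - 2ε)² (1 + ε) > 0`
    ⟨ε * (1 / 2 - ε), by nlinarith, by nlinarith, by nlinarith,
      by nlinarith [mul_pos (mul_pos (sub_pos.2 hε1) (sub_pos.2 hε1)) (by linarith : 0 < ε + 1)]⟩
  have hbound := fun k n (hn : n ≤ k) =>
    div_le_tailWeight (β := β) hC.le (by linarith) (by linarith) hβ0.le hβ1 hb1 hb2 hn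
  have hnonneg : ∀ k n j : ℕ, n ≤ k → 0 ≤ a n (k + 1 + j) / ((k : ℝ) + 1 + j - n) :=
    fun k n j hn => div_nonneg (hpos _ _) (by
      have : (n : ℝ) ≤ k := by exact_mod_cast hn
      linarith [j.cast_nonneg (α := ℝ)])
  have hZ := summable_natCast_add_one_rpow (p := -(1 + β)) (by linarith)
  have hsumm : ∀ k : ℕ, ∀ n ≤ k,
      Summable (fun j : ℕ => a n (k + 1 + j) / ((k : ℝ) + 1 + j - n)) := fun k n hn =>
    (hZ.mul_left _).of_nonneg_of_le (hnonneg k n · hn) (hbound k n hn)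
  set Z := ∑' j : ℕ, ((j : ℝ) + 1) ^ (-(1 + β))
  have hlim := (tendsto_sum_tailWeight hε0.le (by linarith) hβε hβσ).const_mul (C * Z)
  rw [mul_zero] at hlim
  refine ⟨hsumm, squeeze_zero (fun k => sum_nonneg fun n hn => tsum_nonneg fun j =>
    hnonneg k n j (Nat.lt_succ_iff.1 (mem_range.1 hn))) (fun k => ?_) hlim⟩
  rw [mul_sum]
  refine sum_le_sum fun n hn => ?_
  have hn := Nat.lt_succ_iff.1 (mem_range.1 hn)
  calc ∑' j : ℕ, a n (k + 1 + j) / ((k : ℝ) + 1 + j - n)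
      ≤ ∑' j : ℕ, C * tailWeight ε β k n * ((j : ℝ) + 1) ^ (-(1 + β)) :=
        (hsumm k n hn).tsum_le_tsum (hbound k n hn) (hZ.mul_left _)
    _ = C * Z * tailWeight ε β k n := by rw [tsum_mul_left]; ring
end

section
/- Let q : [0,∞) → ℝ be continuous and let σ, τ ∈ ℝ with σ ≠ τ. Let f, g, χ : [0,∞) → ℝ be twice continuously differentiable functions satisfying −f''(x) + (x² + q(x)) f(x) = σ f(x), −g''(x) + (x² + q(x)) g(x) = τ g(x), and −χ''(x) + (x² + q(x)) χ(x) = τ χ(x) for all x ≥ 0, with f(0) = g(0) = 0. Assume that the functions x ↦ (f²)'(x)·(gχ)(x) and x ↦ f²(x)·(gχ)'(x) are integrable on (0,∞), that f²(x) g(x) χ(x) → 0 as x → ∞, and that (g f' − g' f)(x) · (χ f' − χ' f)(x) → 0 as x → ∞. Then ∫_0^∞ (f²)'(x) · (gχ)(x) dx = 0. -/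
open MeasureTheory Set Filter

/-- Orthogonality relation `∫_0^∞ (f²)'·(gχ) = 0` for solutions of the perturbed harmonic
oscillator equation on the half-line with Dirichlet condition: `f` solves with energy `σ`,
`g, χ` with energy `τ ≠ σ`, `f(0) = g(0) = 0`, with the stated integrability and decay. -/
theorem stmt19 (q : ℝ → ℝ) (hq : ContinuousOn q (Ici 0))
    (σ τ : ℝ) (hστ : σ ≠ τ)
    (f f' f'' g g' g'' χ χ' χ'' : ℝ → ℝ)
    (hf1 : ∀ x ∈ Ici (0 : ℝ), HasDerivWithinAt f (f' x) (Ici 0) x)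
    (hf2 : ∀ x ∈ Ici (0 : ℝ), HasDerivWithinAt f' (f'' x) (Ici 0) x)
    (hf3 : ContinuousOn f'' (Ici 0))
    (hg1 : ∀ x ∈ Ici (0 : ℝ), HasDerivWithinAt g (g' x) (Ici 0) x)
    (hg2 : ∀ x ∈ Ici (0 : ℝ), HasDerivWithinAt g' (g'' x) (Ici 0) x)
    (hg3 : ContinuousOn g'' (Ici 0))
    (hχ1 : ∀ x ∈ Ici (0 : ℝ), HasDerivWithinAt χ (χ' x) (Ici 0) x)
    (hχ2 : ∀ x ∈ Ici (0 : ℝ), HasDerivWithinAt χ' (χ'' x) (Ici 0) x)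
    (hχ3 : ContinuousOn χ'' (Ici 0))
    (heqf : ∀ x ∈ Ici (0 : ℝ), -f'' x + (x ^ 2 + q x) * f x = σ * f x)
    (heqg : ∀ x ∈ Ici (0 : ℝ), -g'' x + (x ^ 2 + q x) * g x = τ * g x)
    (heqχ : ∀ x ∈ Ici (0 : ℝ), -χ'' x + (x ^ 2 + q x) * χ x = τ * χ x)
    (hf0 : f 0 = 0) (hg0 : g 0 = 0)
    (hint1 : IntegrableOn (fun x => (2 * f x * f' x) * (g x * χ x)) (Ioi 0))
    (hint2 : IntegrableOn (fun x => f x ^ 2 * (g' x * χ x + g x * χ' x)) (Ioi 0))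
    (hlim1 : Tendsto (fun x => f x ^ 2 * g x * χ x) atTop (nhds 0))
    (hlim2 : Tendsto (fun x =>
        (g x * f' x - g' x * f x) * (χ x * f' x - χ' x * f x)) atTop (nhds 0)) :
    ∫ x in Ioi (0 : ℝ), (2 * f x * f' x) * (g x * χ x) = 0 := by

  set A : ℝ → ℝ := fun x => (2 * f x * f' x) * (g x * χ x) with hA
  set B : ℝ → ℝ := fun x => f x ^ 2 * (g' x * χ x + g x * χ' x) with hB
  -- F₁ = f² g χ
  have hF1 : ∀ x ∈ Ici (0 : ℝ), HasDerivWithinAt (fun x => f x ^ 2 * (g x * χ x))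
      (A x + B x) (Ici 0) x := by
    intro x hx
    have h := (((hf1 x hx).mul (hf1 x hx)).mul ((hg1 x hx).mul (hχ1 x hx)))
    have : (fun x => f x ^ 2 * (g x * χ x)) = fun x => (f x * f x) * (g x * χ x) := by
      funext y; ring
    rw [this]
    refine h.congr_deriv ?_
    simp only [hA, hB, Pi.mul_apply]; ring
  have key1 : (∫ x in Ioi (0:ℝ), (A x + B x)) = 0 := by
    have := integral_Ioi_of_hasDerivAt_of_tendsto
      (f := fun x => f x ^ 2 * (g x * χ x)) (f' := fun x => A x + B x) (a := 0)
      ((hF1 0 self_mem_Ici).continuousWithinAt)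
      (fun x hx => (hF1 x (Ioi_subset_Ici_self hx)).hasDerivAt (Ici_mem_nhds hx))
      (hint1.add hint2)
      (by simpa [mul_assoc] using hlim1)
    simpa [hf0] using this
  -- Wronskians
  have hWg : ∀ x ∈ Ici (0 : ℝ), HasDerivWithinAt (fun x => g x * f' x - g' x * f x)
      ((τ - σ) * (g x * f x)) (Ici 0) x := by
    intro x hx
    have h := ((hg1 x hx).mul (hf2 x hx)).sub ((hg2 x hx).mul (hf1 x hx))
    refine h.congr_deriv ?_
    have ef : f'' x = (x ^ 2 + q x) * f x - σ * f x := by linarith [heqf x hx]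
    have eg : g'' x = (x ^ 2 + q x) * g x - τ * g x := by linarith [heqg x hx]
    rw [ef, eg]; ring
  have hWχ : ∀ x ∈ Ici (0 : ℝ), HasDerivWithinAt (fun x => χ x * f' x - χ' x * f x)
      ((τ - σ) * (χ x * f x)) (Ici 0) x := by
    intro x hx
    have h := ((hχ1 x hx).mul (hf2 x hx)).sub ((hχ2 x hx).mul (hf1 x hx))
    refine h.congr_deriv ?_
    have ef : f'' x = (x ^ 2 + q x) * f x - σ * f x := by linarith [heqf x hx]
    have eχ : χ'' x = (x ^ 2 + q x) * χ x - τ * χ x := by linarith [heqχ x hx]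
    rw [ef, eχ]; ring
  have hF2 : ∀ x ∈ Ici (0 : ℝ), HasDerivWithinAt
      (fun x => (g x * f' x - g' x * f x) * (χ x * f' x - χ' x * f x))
      ((τ - σ) * (A x - B x)) (Ici 0) x := by
    intro x hx
    have h := (hWg x hx).mul (hWχ x hx)
    refine h.congr_deriv ?_
    simp only [hA, hB]; ring
  have key2 : (∫ x in Ioi (0:ℝ), (τ - σ) * (A x - B x)) = 0 := by
    have := integral_Ioi_of_hasDerivAt_of_tendsto
      (f := fun x => (g x * f' x - g' x * f x) * (χ x * f' x - χ' x * f x))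
      (f' := fun x => (τ - σ) * (A x - B x)) (a := 0)
      ((hF2 0 self_mem_Ici).continuousWithinAt)
      (fun x hx => (hF2 x (Ioi_subset_Ici_self hx)).hasDerivAt (Ici_mem_nhds hx))
      (((hint1.sub hint2).const_mul _))
      hlim2
    simpa [hf0, hg0] using this
  have hIA : ∫ x in Ioi (0:ℝ), A x = - ∫ x in Ioi (0:ℝ), B x := by
    have := (integral_add hint1 hint2).symm.trans key1
    linarith
  have hsub : (τ - σ) * ((∫ x in Ioi (0:ℝ), A x) - ∫ x in Ioi (0:ℝ), B x) = 0 := by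
    rw [← integral_sub hint1 hint2, ← integral_const_mul]
    exact key2
  have hne : τ - σ ≠ 0 := sub_ne_zero.mpr (Ne.symm hστ)
  have := mul_eq_zero.mp hsub
  rcases this with h | h
  · exact absurd h hne
  · show (∫ x in Ioi (0:ℝ), A x) = 0
    linarith
end
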